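/- arXiv:1107.2680 — 3 statements merged into one kernel-verified Lean document; each statement's English description precedes it below -/
import Mathlib

section
/- Splitting of a boundary-value integral: for real x with -1 < x < 1, real κ with κ < 1/2, and continuous f : [-1,1] → ℂ, the limit as ε → 0⁺ of ∫_{-1}^{1} f(t)/((x + iε) - t)^{κ+1/2} dt equals ∫_{-1}^{x} f(t)/(x-t)^{κ+1/2} dt + e^{-iπ(κ+1/2)} ∫_{x}^{1} f(t)/(t-x)^{κ+1/2} dt, where w^α = exp(α Log w) with Log the principal branch of the complex logarithm. -/
/-!
Dominated convergence, with `a = κ + 1/2 < 1`. For `ε ∈ (0, 1]` the base `w = x + iε - t` satisfies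
`|x - t| ≤ ‖w‖ ≤ |x - t| + 1`, so `‖f t / w ^ a‖` is dominated by a multiple of
`(|x - t| + 1) ^ (-a) + |x - t| ^ (-a)`, which is integrable. Pointwise, `w → x - t` from the
upper half-plane: for `t < x` this is a point of the slit plane where `cpow` is continuous, while
for `t > x` the principal logarithm tends to `log (t - x) + πi`, producing the factor `e^{iπa}`.
The two limits are taken separately on `[-1, x]` and `[x, 1]`.
-/

open Complex MeasureTheory Filter Set intervalIntegral Topology
open scoped Real Interval

lemma rpow_le_rpow_add_rpow_of_le_of_le {r w R : ℝ} (hr : 0 < r) (hrw : r ≤ w) (hwR : w ≤ R)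
    (b : ℝ) : w ^ b ≤ R ^ b + r ^ b := by
  rcases le_total 0 b with hb | hb
  · exact (Real.rpow_le_rpow (hr.le.trans hrw) hwR hb).trans
      (le_add_of_nonneg_right (Real.rpow_nonneg hr.le _))
  · exact (Real.rpow_le_rpow_of_nonpos hr hrw hb).trans
      (le_add_of_nonneg_left (Real.rpow_nonneg (hr.le.trans (hrw.trans hwR)) _))

lemma norm_div_cpow_ofReal (z w : ℂ) (a : ℝ) : ‖z / w ^ (a : ℂ)‖ = ‖z‖ * ‖w‖ ^ (-a) := by
  rw [norm_div, norm_cpow_real, Real.rpow_neg (norm_nonneg w), div_eq_mul_inv]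

lemma intervalIntegrable_abs_rpow {b : ℝ} (hb : -1 < b) (c d : ℝ) :
    IntervalIntegrable (fun t => |t| ^ b) volume c d := by
  have hpos := intervalIntegrable_rpow' (a := c) (b := d) hb
  have hneg : IntervalIntegrable (fun t => (-t) ^ b) volume c d := by
    simpa using (intervalIntegrable_rpow' (a := -c) (b := -d) hb).comp_sub_left 0
  refine (hpos.norm.add hneg.norm).mono_fun'
    (continuous_abs.measurable.pow_const b).aestronglyMeasurable (Eventually.of_forall fun t => ?_)
  rcases le_total 0 t with ht | ht
  · simp [abs_of_nonneg ht, Real.norm_eq_abs, abs_of_nonneg (Real.rpow_nonneg ht b)]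
  · simp [abs_of_nonpos ht, Real.norm_eq_abs, abs_of_nonneg (Real.rpow_nonneg (neg_nonneg.2 ht) b)]

lemma intervalIntegrable_abs_sub_rpow {b : ℝ} (hb : -1 < b) (x c d : ℝ) :
    IntervalIntegrable (fun t => |x - t| ^ b) volume c d := by
  simpa using (intervalIntegrable_abs_rpow hb (x - c) (x - d)).comp_sub_left x

lemma tendsto_ofReal_add_mul_I_sub (x t : ℝ) :
    Tendsto (fun ε : ℝ => (x : ℂ) + ε * I - t) (𝓝[>] 0) (𝓝 ((x : ℂ) - t)) := by
  have h : Continuous fun ε : ℝ => (x : ℂ) + ε * I - t := by fun_prop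
  simpa using (h.tendsto 0).mono_left nhdsWithin_le_nhds

lemma tendsto_cpow_ofReal_add_mul_I_sub_of_lt {x t : ℝ} (htx : t < x) (α : ℂ) :
    Tendsto (fun ε : ℝ => ((x : ℂ) + ε * I - t) ^ α) (𝓝[>] 0) (𝓝 (((x : ℂ) - t) ^ α)) := by
  have hslit : (x : ℂ) - t ∈ slitPlane := by
    rw [← ofReal_sub, ofReal_mem_slitPlane]; linarith
  exact ((continuousAt_cpow_const hslit).tendsto).comp (tendsto_ofReal_add_mul_I_sub x t)

lemma tendsto_cpow_ofReal_add_mul_I_sub_of_gt {x t : ℝ} (hxt : x < t) (α : ℂ) :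
    Tendsto (fun ε : ℝ => ((x : ℂ) + ε * I - t) ^ α) (𝓝[>] 0)
      (𝓝 (exp (π * I * α) * ((t : ℂ) - x) ^ α)) := by
  have hnorm : ‖(x : ℂ) - t‖ = t - x := by
    rw [← ofReal_sub, norm_real, Real.norm_eq_abs, abs_of_neg (by linarith), neg_sub]
  have hlog : Tendsto (fun ε : ℝ => log ((x : ℂ) + ε * I - t)) (𝓝[>] 0)
      (𝓝 (Real.log (t - x) + π * I)) := by
    rw [← hnorm]
    refine (tendsto_log_nhdsWithin_im_nonneg_of_re_neg_of_im_zero (by simpa using hxt)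
      (by simp)).comp (tendsto_nhdsWithin_iff.2 ⟨tendsto_ofReal_add_mul_I_sub x t, ?_⟩)
    filter_upwards [self_mem_nhdsWithin] with ε hε
    simpa using le_of_lt hε
  have hlim : exp (π * I * α) * ((t : ℂ) - x) ^ α = exp ((Real.log (t - x) + π * I) * α) := by
    rw [← ofReal_sub, cpow_def_of_ne_zero (by exact_mod_cast (sub_pos.2 hxt).ne'),
      ← ofReal_log (sub_pos.2 hxt).le, ← exp_add]
    ring_nf
  rw [hlim]
  refine ((continuous_exp.tendsto _).comp (hlog.mul_const α)).congr' ?_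
  filter_upwards [self_mem_nhdsWithin] with ε hε
  have hne : (x : ℂ) + ε * I - t ≠ 0 := fun h => by
    simpa [(show (0:ℝ) < ε from hε).ne'] using congrArg im h
  simp [cpow_def_of_ne_zero hne]

lemma tendsto_div_cpow_ofReal_add_mul_I_sub_of_lt {x t : ℝ} (htx : t < x) (z α : ℂ) :
    Tendsto (fun ε : ℝ => z / ((x : ℂ) + ε * I - t) ^ α) (𝓝[>] 0) (𝓝 (z / ((x : ℂ) - t) ^ α)) :=
  tendsto_const_nhds.div (tendsto_cpow_ofReal_add_mul_I_sub_of_lt htx α)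
    (cpow_ne_zero_iff.2 (Or.inl (sub_ne_zero.2 (by exact_mod_cast htx.ne'))))

lemma tendsto_div_cpow_ofReal_add_mul_I_sub_of_gt {x t : ℝ} (hxt : x < t) (z α : ℂ) :
    Tendsto (fun ε : ℝ => z / ((x : ℂ) + ε * I - t) ^ α) (𝓝[>] 0)
      (𝓝 (exp (-π * I * α) * (z / ((t : ℂ) - x) ^ α))) := by
  have hlim := (tendsto_const_nhds (x := z)).div (tendsto_cpow_ofReal_add_mul_I_sub_of_gt hxt α)
    (mul_ne_zero (exp_ne_zero _)
      (cpow_ne_zero_iff.2 (Or.inl (sub_ne_zero.2 (by exact_mod_cast hxt.ne')))))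
  rwa [show z / (exp (π * I * α) * ((t : ℂ) - x) ^ α)
      = exp (-π * I * α) * (z / ((t : ℂ) - x) ^ α) by
    rw [neg_mul, neg_mul, exp_neg]; ring] at hlim

lemma continuous_cpow_ofReal_add_mul_I_sub {x ε : ℝ} (hε : ε ≠ 0) (α : ℂ) :
    Continuous fun t : ℝ => ((x : ℂ) + ε * I - t) ^ α :=
  (by fun_prop : Continuous fun t : ℝ => (x : ℂ) + ε * I - t).cpow continuous_const fun t =>
    mem_slitPlane_iff.2 (Or.inr (by simpa using hε))

lemma continuousOn_div_cpow_ofReal_add_mul_I_sub {f : ℝ → ℂ} {s : Set ℝ} (hf : ContinuousOn f s)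
    {x ε : ℝ} (hε : ε ≠ 0) (α : ℂ) :
    ContinuousOn (fun t : ℝ => f t / ((x : ℂ) + ε * I - t) ^ α) s :=
  hf.div (continuous_cpow_ofReal_add_mul_I_sub hε α).continuousOn fun t _ =>
    cpow_ne_zero_iff.2 (Or.inl fun h => hε (by simpa using congrArg im h))

lemma tendsto_integral_div_cpow_ofReal_add_mul_I_sub {f g : ℝ → ℂ} {x a c d : ℝ} (ha : a < 1)
    (hf : ContinuousOn f (uIcc c d))
    (hg : ∀ᵐ t, t ∈ Ι c d →
      Tendsto (fun ε : ℝ => f t / ((x : ℂ) + ε * I - t) ^ (a : ℂ)) (𝓝[>] 0) (𝓝 (g t))) :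
    Tendsto (fun ε : ℝ => ∫ t in c..d, f t / ((x : ℂ) + ε * I - t) ^ (a : ℂ)) (𝓝[>] 0)
      (𝓝 (∫ t in c..d, g t)) := by
  obtain ⟨M, hM⟩ := isCompact_uIcc.exists_bound_of_continuousOn hf
  refine tendsto_integral_filter_of_dominated_convergence
    (fun t => M * ((|x - t| + 1) ^ (-a) + |x - t| ^ (-a))) ?_ ?_ ?_ hg
  · filter_upwards [self_mem_nhdsWithin] with ε (hε : 0 < ε)
    exact ((continuousOn_div_cpow_ofReal_add_mul_I_sub hf hε.ne' _).intervalIntegrable).def'.1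
  · filter_upwards [Ioc_mem_nhdsGT zero_lt_one] with ε ⟨hε0, hε1⟩
    filter_upwards [Measure.ae_ne volume x] with t htx ht
    have hre : |x - t| ≤ ‖(x : ℂ) + ε * I - t‖ := by
      simpa using abs_re_le_norm ((x : ℂ) + ε * I - t)
    have him : ‖(x : ℂ) + ε * I - t‖ ≤ |x - t| + 1 := by
      refine (norm_le_abs_re_add_abs_im _).trans ?_
      simp [abs_of_pos hε0, hε1]
    rw [norm_div_cpow_ofReal]
    exact mul_le_mul (hM t (Ioc_subset_Icc_self ht))
      (rpow_le_rpow_add_rpow_of_le_of_le (abs_pos.2 (sub_ne_zero.2 htx.symm)) hre him _)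
      (Real.rpow_nonneg (norm_nonneg _) _) ((norm_nonneg _).trans (hM t (Ioc_subset_Icc_self ht)))
  · refine (IntervalIntegrable.add ?_
      (intervalIntegrable_abs_sub_rpow (by linarith) x c d)).const_mul M
    exact (Continuous.rpow_const (by fun_prop) fun t => Or.inl (by positivity)).intervalIntegrable
      _ _

open Complex in
theorem boundary_value_integral_split (x κ : ℝ) (hx : -1 < x) (hx' : x < 1) (hκ : κ < 1 / 2)
    (f : ℝ → ℂ) (hf : ContinuousOn f (Set.Icc (-1 : ℝ) 1)) :
    Filter.Tendsto
      (fun ε : ℝ => ∫ t in (-1 : ℝ)..1, f t / ((↑x + ↑ε * I - ↑t) ^ ((κ : ℂ) + 1 / 2)))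
      (nhdsWithin 0 (Set.Ioi 0))
      (nhds ((∫ t in (-1 : ℝ)..x, f t / (((x : ℂ) - ↑t) ^ ((κ : ℂ) + 1 / 2)))
        + Complex.exp (-(↑Real.pi) * I * ((κ : ℂ) + 1 / 2))
          * ∫ t in x..(1 : ℝ), f t / (((t : ℂ) - ↑x) ^ ((κ : ℂ) + 1 / 2)))) := by
  have hα : (κ : ℂ) + 1 / 2 = ((κ + 1 / 2 : ℝ) : ℂ) := by push_cast; ring
  rw [hα]
  set a := κ + 1 / 2
  have ha : a < 1 := by simp only [a]; linarith
  have hleft := tendsto_integral_div_cpow_ofReal_add_mul_I_sub (x := x) ha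
    (hf.mono (uIcc_of_le hx.le ▸ Icc_subset_Icc_right hx'.le))
    (g := fun t => f t / ((x : ℂ) - t) ^ (a : ℂ)) (by
      filter_upwards [Measure.ae_ne volume x] with t htx ht
      exact tendsto_div_cpow_ofReal_add_mul_I_sub_of_lt
        (lt_of_le_of_ne (uIoc_of_le hx.le ▸ ht).2 htx) _ _)
  have hright := tendsto_integral_div_cpow_ofReal_add_mul_I_sub (x := x) ha
    (hf.mono (uIcc_of_le hx'.le ▸ Icc_subset_Icc_left hx.le))
    (g := fun t => exp (-π * I * a) * (f t / ((t : ℂ) - x) ^ (a : ℂ))) (Eventually.of_forall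
      fun t ht => tendsto_div_cpow_ofReal_add_mul_I_sub_of_gt (uIoc_of_le hx'.le ▸ ht).1 _ _)
  rw [intervalIntegral.integral_const_mul] at hright
  refine (hleft.add hright).congr' ?_
  filter_upwards [self_mem_nhdsWithin] with ε (hε : 0 < ε)
  have hF : IntervalIntegrable (fun t : ℝ => f t / ((x : ℂ) + ε * I - t) ^ (a : ℂ)) volume (-1) 1 :=
    (continuousOn_div_cpow_ofReal_add_mul_I_sub hf hε.ne' _).intervalIntegrable_of_Icc (by norm_num)
  exact integral_add_adjacent_intervals
    (hF.mono_set (uIcc_subset_uIcc_left (by simp [hx.le, hx'.le])))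
    (hF.mono_set (uIcc_subset_uIcc_right (by simp [hx.le, hx'.le])))
end

section
/- (Heine's identity, partial sums / closed form) For real t with -1 < t < 1 and real z > 1, the series Σ_{n=0}^{∞} (2n+1) Q_n(z) P_n(t) converges to 1/(z - t), where Q_n(z) = (1/2) ∫_{-1}^{1} P_n(s)/(z - s) ds. -/
/-!
Legendre's three-term recurrence is satisfied by `P_n(t)` and, because `P_{n+1}` is orthogonal
to constants, also by `Q_n(z)`. Hence the Christoffel–Darboux telescoping gives
`(z - t) ∑_{n ≤ N} (2n+1) Q_n(z) P_n(t) = 1 - (N+1) (P_{N+1}(t) Q_N(z) - P_N(t) Q_{N+1}(z))`.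
The remainder tends to zero since `|P_n| ≤ 1` on `[-1, 1]` (an energy argument for Legendre's
differential equation) and `|Q_n(z)| ≤ z⁻ⁿ / (z - 1)`: orthogonality of `P_n` to `sᵏ`, `k < n`,
turns `zⁿ Q_n(z)` into `½ ∫ sⁿ P_n(s) / (z - s) ds`.
-/

/-- The `n`-th Legendre polynomial, via Rodrigues' formula. -/
noncomputable def legendreP (n : ℕ) (x : ℝ) : ℝ :=
  (1 / (2 ^ n * (Nat.factorial n))) * iteratedDeriv n (fun t : ℝ => (t ^ 2 - 1) ^ n) x

open Polynomial

section IterateDerivative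

variable {R : Type*} [CommRing R]

theorem iterate_derivative_X_sq_sub_one_mul (m : ℕ) (p : R[X]) :
    derivative^[m + 2] ((X ^ 2 - 1) * p) =
      (X ^ 2 - 1) * derivative^[m + 2] p + 2 * ((m : R[X]) + 2) * X * derivative^[m + 1] p
        + ((m : R[X]) + 2) * ((m : R[X]) + 1) * derivative^[m] p := by
  rw [show (X ^ 2 - 1) * p = p * X * X - p by ring, iterate_derivative_sub,
    iterate_derivative_mul_X, iterate_derivative_mul_X, iterate_derivative_mul_X]
  simp only [nsmul_eq_mul, Nat.add_sub_cancel, show m + 2 - 1 = m + 1 by omega]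
  push_cast
  ring

end IterateDerivative

theorem iteratedDeriv_polynomial_eval {𝕜 : Type*} [NontriviallyNormedField 𝕜] (n : ℕ)
    (p : 𝕜[X]) :
    iteratedDeriv n (fun x => p.eval x) = fun x => (derivative^[n] p).eval x := by
  induction n generalizing p with
  | zero => simp
  | succ n ih =>
    rw [iteratedDeriv_succ', show deriv (fun x => p.eval x) = fun x => (derivative p).eval x from
      funext fun x => p.deriv, ih, Function.iterate_succ_apply]

noncomputable def legendrePoly (n : ℕ) : ℝ[X] :=
  C (1 / (2 ^ n * n.factorial : ℝ)) * derivative^[n] ((X ^ 2 - 1) ^ n)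

theorem legendreP_eq_eval (n : ℕ) : legendreP n = fun x => (legendrePoly n).eval x := by
  funext x
  have : (fun t : ℝ => (t ^ 2 - 1) ^ n) = fun t => ((X ^ 2 - 1 : ℝ[X]) ^ n).eval t := by
    simp
  rw [legendreP, this, iteratedDeriv_polynomial_eval, legendrePoly, eval_mul, eval_C]

theorem legendrePoly_zero : legendrePoly 0 = 1 := by simp [legendrePoly]

theorem legendrePoly_one : legendrePoly 1 = X := by
  simp only [legendrePoly, pow_one, Nat.factorial_one, Nat.cast_one, mul_one, one_div,
    Function.iterate_one, derivative_sub, derivative_X_pow, derivative_one, sub_zero]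
  rw [← mul_assoc, ← C_mul]
  norm_num

theorem derivative_sq_sub_one_pow_succ (n : ℕ) :
    derivative ((X ^ 2 - 1 : ℝ[X]) ^ (n + 1))
      = ((2 * (n + 1) : ℕ) : ℝ[X]) * ((X ^ 2 - 1) ^ n * X) := by
  rw [derivative_pow_succ]
  simp only [derivative_sub, derivative_X_pow_succ, derivative_one, map_add, map_natCast,
    map_one, Nat.cast_one, Nat.cast_mul, Nat.cast_ofNat, Nat.cast_add, pow_one, sub_zero]
  ring

theorem derivative_legendrePoly_succ (n : ℕ) :
    derivative (legendrePoly (n + 1))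
      = X * derivative (legendrePoly n) + ((n : ℝ[X]) + 1) * legendrePoly n := by
  have hc : C (1 / (2 ^ (n + 1) * (n + 1).factorial : ℝ)) * ((2 * (n + 1) : ℕ) : ℝ[X])
      = C (1 / (2 ^ n * n.factorial : ℝ)) := by
    rw [← C_eq_natCast, ← C_mul, Nat.factorial_succ]
    congr 1
    push_cast
    field_simp
    ring
  rw [legendrePoly, derivative_C_mul, (Function.Commute.self_iterate derivative (n + 1)).eq,
    derivative_sq_sub_one_pow_succ, iterate_derivative_natCast_mul, iterate_derivative_mul_X,
    ← mul_assoc, hc, legendrePoly, derivative_C_mul, ← Function.iterate_succ_apply' derivative]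
  simp only [Nat.add_sub_cancel, nsmul_eq_mul, Nat.cast_add, Nat.cast_one]
  ring

theorem legendrePoly_ode (n : ℕ) :
    (X ^ 2 - 1) * derivative (derivative (legendrePoly n)) + 2 * X * derivative (legendrePoly n)
      = (n : ℝ[X]) * ((n : ℝ[X]) + 1) * legendrePoly n := by
  cases n with
  | zero => simp [legendrePoly_zero]
  | succ m =>
    set u : ℝ[X] := (X ^ 2 - 1) ^ (m + 1)
    have hu : (X ^ 2 - 1) * derivative u = ((2 * (m + 1) : ℕ) : ℝ[X]) * (u * X) := by
      rw [derivative_sq_sub_one_pow_succ, pow_succ']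
      ring
    have hw := congrArg derivative^[m + 2] hu
    rw [iterate_derivative_X_sq_sub_one_mul, iterate_derivative_natCast_mul,
      iterate_derivative_mul_X] at hw
    simp only [← Function.iterate_succ_apply, Nat.succ_eq_add_one, nsmul_eq_mul] at hw
    simp only [legendrePoly, derivative_C_mul, ← Function.iterate_succ_apply' derivative]
    push_cast at hw ⊢
    linear_combination C (1 / (2 ^ (m + 1) * (m + 1).factorial : ℝ)) * hw

theorem succ_mul_legendrePoly_succ (n : ℕ) : ((n : ℝ[X]) + 1) * legendrePoly (n + 1)
    = ((n : ℝ[X]) + 1) * X * legendrePoly n + (X ^ 2 - 1) * derivative (legendrePoly n) := by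
  have hne : ((n : ℝ[X]) + 2) ≠ 0 := by norm_cast
  apply mul_left_cancel₀ hne
  have hR := derivative_legendrePoly_succ n
  have hR' := congrArg derivative hR
  simp only [derivative_add, derivative_mul, derivative_X, derivative_natCast,
    derivative_one, zero_mul, one_mul, zero_add, add_zero] at hR'
  have hode := legendrePoly_ode n
  have hode' := legendrePoly_ode (n + 1)
  push_cast at hode'
  linear_combination -hode' + (X ^ 2 - 1) * hR' + 2 * X * hR + X * hode

theorem legendrePoly_recurrence (n : ℕ) : ((n : ℝ[X]) + 2) * legendrePoly (n + 2)
    = (2 * (n : ℝ[X]) + 3) * X * legendrePoly (n + 1) - ((n : ℝ[X]) + 1) * legendrePoly n := by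
  have h := succ_mul_legendrePoly_succ (n + 1)
  push_cast at h
  linear_combination h + (X ^ 2 - 1) * derivative_legendrePoly_succ n
    - X * succ_mul_legendrePoly_succ n

theorem eval_legendrePoly_of_sq_eq_one {x : ℝ} (hx : x ^ 2 = 1) (n : ℕ) :
    (legendrePoly n).eval x = x ^ n := by
  induction n with
  | zero => simp [legendrePoly_zero]
  | succ n ih =>
    have h := congrArg (eval x) (succ_mul_legendrePoly_succ n)
    simp only [eval_mul, eval_add, eval_sub, eval_pow, eval_X, eval_one, eval_natCast, hx,
      sub_self, zero_mul, add_zero, ih] at h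
    refine mul_left_cancel₀ (n.cast_add_one_ne_zero (R := ℝ)) ?_
    rw [h, pow_succ]
    ring

theorem sq_eval_le_max_of_legendre_ode {p : ℝ[X]} {c : ℝ} (hc : 0 < c)
    (hode : ∀ y : ℝ, (y ^ 2 - 1) * (derivative (derivative p)).eval y
      + 2 * y * (derivative p).eval y = c * p.eval y)
    {x : ℝ} (hx : x ∈ Set.Icc (-1 : ℝ) 1) :
    p.eval x ^ 2 ≤ max (p.eval (-1) ^ 2) (p.eval 1 ^ 2) := by
  -- the energy `p ^ 2 + (1 - y ^ 2) p' ^ 2 / c` has derivative `2 y p' ^ 2 / c`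
  set g : ℝ → ℝ := fun y => p.eval y ^ 2 + (1 - y ^ 2) / c * (derivative p).eval y ^ 2
  have hg : ∀ y, HasDerivAt g (2 * y * (derivative p).eval y ^ 2 / c) y := by
    intro y
    have h := ((p.hasDerivAt y).pow 2).add
      ((((hasDerivAt_pow 2 y).const_sub 1).div_const c).mul
        (((derivative p).hasDerivAt y).pow 2))
    refine h.congr_deriv ?_
    simp only [Pi.pow_apply, Nat.cast_ofNat, Nat.add_one_sub_one, pow_one]
    field_simp
    linear_combination (-(derivative p).eval y) * hode y
  have hcont : Continuous g := continuous_iff_continuousAt.2 fun y => (hg y).continuousAt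
  have hmono : MonotoneOn g (Set.Icc 0 1) := by
    refine monotoneOn_of_hasDerivWithinAt_nonneg (convex_Icc 0 1) hcont.continuousOn
      (fun y _ => (hg y).hasDerivWithinAt) fun y hy => ?_
    rw [interior_Icc] at hy
    have := hy.1.le
    positivity
  have hanti : AntitoneOn g (Set.Icc (-1) 0) := by
    refine antitoneOn_of_hasDerivWithinAt_nonpos (convex_Icc (-1) 0) hcont.continuousOn
      (fun y _ => (hg y).hasDerivWithinAt) fun y hy => ?_
    rw [interior_Icc] at hy
    exact div_nonpos_of_nonpos_of_nonneg
      (mul_nonpos_of_nonpos_of_nonneg (by linarith [hy.2]) (sq_nonneg _)) hc.le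
  have hgx : p.eval x ^ 2 ≤ g x := by
    have : 0 ≤ 1 - x ^ 2 := by nlinarith [hx.1, hx.2]
    have : 0 ≤ (1 - x ^ 2) / c * (derivative p).eval x ^ 2 := by positivity
    linarith
  have hend : ∀ y : ℝ, y ^ 2 = 1 → g y = p.eval y ^ 2 := fun y hy => by simp [g, hy]
  rcases le_total x 0 with hx0 | hx0
  · refine le_max_of_le_left (hgx.trans ?_)
    exact (hanti ⟨le_rfl, by norm_num⟩ ⟨hx.1, hx0⟩ hx.1).trans_eq (hend (-1) (by norm_num))
  · refine le_max_of_le_right (hgx.trans ?_)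
    exact (hmono ⟨hx0, hx.2⟩ ⟨zero_le_one, le_rfl⟩ hx.2).trans_eq (hend 1 (by norm_num))

theorem abs_eval_legendrePoly_le_one (n : ℕ) {x : ℝ} (hx : x ∈ Set.Icc (-1 : ℝ) 1) :
    |(legendrePoly n).eval x| ≤ 1 := by
  rcases n.eq_zero_or_pos with rfl | hn
  · simp [legendrePoly_zero]
  have hn' : (0 : ℝ) < n := Nat.cast_pos.2 hn
  have hode (y : ℝ) := congrArg (eval y) (legendrePoly_ode n)
  simp only [eval_add, eval_mul, eval_sub, eval_pow, eval_X, eval_one, eval_natCast,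
    eval_ofNat] at hode
  have h := sq_eval_le_max_of_legendre_ode (c := n * (n + 1)) (by positivity) hode hx
  rw [eval_legendrePoly_of_sq_eq_one (x := -1) (by norm_num),
    eval_legendrePoly_of_sq_eq_one (x := 1) (by norm_num), ← pow_mul, pow_mul', neg_one_sq,
    one_pow, one_pow, max_self] at h
  exact (sq_le_one_iff_abs_le_one _).mp h

section Orthogonality

open intervalIntegral

theorem integral_eval_mul_eval_derivative (p q : ℝ[X]) (a b : ℝ) :
    ∫ x in a..b, p.eval x * (derivative q).eval x
      = p.eval b * q.eval b - p.eval a * q.eval a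
        - ∫ x in a..b, (derivative p).eval x * q.eval x :=
  integral_mul_deriv_eq_deriv_mul (fun x _ => p.hasDerivAt x) (fun x _ => q.hasDerivAt x)
    ((derivative p).continuous.intervalIntegrable _ _)
    ((derivative q).continuous.intervalIntegrable _ _)

theorem integral_eval_mul_eval_iterate_derivative {f : ℝ[X]} {a b : ℝ} {k : ℕ}
    (ha : ∀ j < k, (derivative^[j] f).eval a = 0) (hb : ∀ j < k, (derivative^[j] f).eval b = 0)
    (g : ℝ[X]) :
    ∫ x in a..b, g.eval x * (derivative^[k] f).eval x
      = (-1) ^ k * ∫ x in a..b, (derivative^[k] g).eval x * f.eval x := by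
  induction k generalizing g with
  | zero => simp
  | succ k ih =>
    rw [Function.iterate_succ_apply', integral_eval_mul_eval_derivative, ha k k.lt_succ_self,
      hb k k.lt_succ_self, ih (fun j hj => ha j (hj.trans k.lt_succ_self))
        (fun j hj => hb j (hj.trans k.lt_succ_self)), ← Function.iterate_succ_apply]
    ring

theorem eval_iterate_derivative_sq_sub_one_pow {n j : ℕ} (hj : j < n) {x : ℝ}
    (hx : x ^ 2 = 1) : (derivative^[j] ((X ^ 2 - 1 : ℝ[X]) ^ n)).eval x = 0 := by
  obtain ⟨q, hq⟩ :=
    pow_sub_dvd_iterate_derivative_of_pow_dvd j (dvd_refl ((X ^ 2 - 1 : ℝ[X]) ^ n))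
  rw [hq, eval_mul, eval_pow, eval_sub, eval_pow, eval_X, eval_one, hx, sub_self,
    zero_pow (Nat.sub_ne_zero_of_lt hj), zero_mul]

theorem integral_eval_mul_legendrePoly_eq_zero {n : ℕ} {r : ℝ[X]} (hr : r.degree < n) :
    ∫ x in (-1 : ℝ)..1, r.eval x * (legendrePoly n).eval x = 0 := by
  simp only [legendrePoly, eval_mul, eval_C, mul_left_comm (r.eval _)]
  rw [integral_const_mul, integral_eval_mul_eval_iterate_derivative
    (fun j hj => eval_iterate_derivative_sq_sub_one_pow hj (by norm_num))
    (fun j hj => eval_iterate_derivative_sq_sub_one_pow hj (by norm_num)),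
    iterate_derivative_eq_zero_of_degree_lt hr]
  simp

end Orthogonality

theorem continuous_legendreP (n : ℕ) : Continuous (legendreP n) := by
  rw [legendreP_eq_eval]
  exact (legendrePoly n).continuous

theorem legendreP_zero (x : ℝ) : legendreP 0 x = 1 := by
  simp [legendreP_eq_eval, legendrePoly_zero]

theorem legendreP_one (x : ℝ) : legendreP 1 x = x := by
  simp [legendreP_eq_eval, legendrePoly_one]

theorem legendreP_recurrence (n : ℕ) (x : ℝ) : ((n : ℝ) + 2) * legendreP (n + 2) x
    = (2 * (n : ℝ) + 3) * x * legendreP (n + 1) x - ((n : ℝ) + 1) * legendreP n x := by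
  simpa [legendreP_eq_eval] using congrArg (eval x) (legendrePoly_recurrence n)

theorem abs_legendreP_le_one (n : ℕ) {x : ℝ} (hx : x ∈ Set.Icc (-1 : ℝ) 1) :
    |legendreP n x| ≤ 1 := by
  rw [legendreP_eq_eval]
  exact abs_eval_legendrePoly_le_one n hx

theorem integral_pow_mul_legendreP_eq_zero {n k : ℕ} (hk : k < n) :
    ∫ x in (-1 : ℝ)..1, x ^ k * legendreP n x = 0 := by
  have h := integral_eval_mul_legendrePoly_eq_zero (r := X ^ k) (n := n)
    (by rw [degree_X_pow]; exact_mod_cast hk)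
  simpa [legendreP_eq_eval] using h

section SecondKind

open intervalIntegral

noncomputable def legendreQ (n : ℕ) (z : ℝ) : ℝ :=
  (1 / 2) * ∫ s in (-1 : ℝ)..1, legendreP n s / (z - s)

theorem sub_ne_zero_of_notMem_uIcc {a b z x : ℝ} (hz : z ∉ Set.uIcc a b)
    (hx : x ∈ Set.uIcc a b) : z - x ≠ 0 :=
  sub_ne_zero.2 fun h => hz (h ▸ hx)

theorem intervalIntegrable_div_sub {f : ℝ → ℝ} {a b z : ℝ} (hf : ContinuousOn f (Set.uIcc a b))
    (hz : z ∉ Set.uIcc a b) :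
    IntervalIntegrable (fun x => f x / (z - x)) MeasureTheory.volume a b :=
  (hf.div (continuousOn_const.sub continuousOn_id)
    fun _ hx => sub_ne_zero_of_notMem_uIcc hz hx).intervalIntegrable

theorem integral_mul_div_sub {f : ℝ → ℝ} {a b z : ℝ} (hf : ContinuousOn f (Set.uIcc a b))
    (hz : z ∉ Set.uIcc a b) :
    ∫ x in a..b, x * f x / (z - x) = z * (∫ x in a..b, f x / (z - x)) - ∫ x in a..b, f x := by
  have h : ∀ x ∈ Set.uIcc a b, x * f x / (z - x) = z * (f x / (z - x)) - f x := by
    intro x hx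
    field_simp [sub_ne_zero_of_notMem_uIcc hz hx]
    ring
  rw [integral_congr h, integral_sub ((intervalIntegrable_div_sub hf hz).const_mul z)
    hf.intervalIntegrable, integral_const_mul]

theorem notMem_uIcc_neg_one_one {z : ℝ} (hz : 1 < z) : z ∉ Set.uIcc (-1 : ℝ) 1 := by
  rw [Set.uIcc_of_le (by norm_num)]
  exact fun h => hz.not_ge h.2

theorem integral_pow_mul_legendreP_div_sub {n k : ℕ} (hk : k ≤ n) {z : ℝ} (hz : 1 < z) :
    ∫ s in (-1 : ℝ)..1, s ^ k * legendreP n s / (z - s)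
      = z ^ k * ∫ s in (-1 : ℝ)..1, legendreP n s / (z - s) := by
  induction k with
  | zero => simp
  | succ k ih =>
    have h := integral_mul_div_sub (f := fun s => s ^ k * legendreP n s)
      ((continuous_pow k).mul (continuous_legendreP n)).continuousOn (notMem_uIcc_neg_one_one hz)
    simp only [← mul_assoc, ← pow_succ'] at h
    rw [h, ih (by omega), integral_pow_mul_legendreP_eq_zero (by omega), pow_succ']
    ring

theorem legendreQ_one {z : ℝ} (hz : 1 < z) : legendreQ 1 z = z * legendreQ 0 z - 1 := by
  have h := integral_mul_div_sub (f := fun _ => (1 : ℝ)) continuousOn_const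
    (notMem_uIcc_neg_one_one hz)
  simp only [mul_one, integral_const, smul_eq_mul] at h
  simp only [legendreQ, legendreP_one, legendreP_zero, h]
  ring

theorem legendreQ_recurrence (n : ℕ) {z : ℝ} (hz : 1 < z) :
    ((n : ℝ) + 2) * legendreQ (n + 2) z
      = (2 * (n : ℝ) + 3) * z * legendreQ (n + 1) z - ((n : ℝ) + 1) * legendreQ n z := by
  have hz' := notMem_uIcc_neg_one_one hz
  have hXP := intervalIntegrable_div_sub (f := fun s => s * legendreP (n + 1) s)
    (continuous_id.mul (continuous_legendreP _)).continuousOn hz'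
  have hP := intervalIntegrable_div_sub (continuous_legendreP n).continuousOn hz'
  have h : ∀ s ∈ Set.uIcc (-1 : ℝ) 1, ((n : ℝ) + 2) * (legendreP (n + 2) s / (z - s))
      = (2 * (n : ℝ) + 3) * (s * legendreP (n + 1) s / (z - s))
        - ((n : ℝ) + 1) * (legendreP n s / (z - s)) := by
    intro s _
    rw [mul_div_assoc', legendreP_recurrence]
    ring
  have hX := integral_pow_mul_legendreP_div_sub (n := n + 1) (k := 1) le_add_self hz
  simp only [pow_one] at hX
  simp only [legendreQ]
  rw [mul_left_comm, ← integral_const_mul, integral_congr h,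
    integral_sub (hXP.const_mul _) (hP.const_mul _), integral_const_mul, integral_const_mul, hX]
  ring

theorem abs_legendreQ_le (n : ℕ) {z : ℝ} (hz : 1 < z) :
    |legendreQ n z| ≤ z⁻¹ ^ n / (z - 1) := by
  have hz0 : 0 < z := one_pos.trans hz
  have hbound : ∀ s ∈ Set.uIoc (-1 : ℝ) 1, ‖s ^ n * legendreP n s / (z - s)‖ ≤ 1 / (z - 1) := by
    intro s hs
    rw [Set.uIoc_of_le (by norm_num)] at hs
    rw [Real.norm_eq_abs, abs_div, abs_mul, abs_pow, abs_of_pos (by linarith [hs.2] : 0 < z - s)]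
    have h1 : |s| ^ n ≤ 1 := pow_le_one₀ (abs_nonneg s) (abs_le.2 ⟨hs.1.le, hs.2⟩)
    have h2 := abs_legendreP_le_one n (Set.Ioc_subset_Icc_self hs)
    gcongr
    · exact mul_le_one₀ h1 (abs_nonneg _) h2
    · exact hs.2
  have hI := norm_integral_le_of_norm_le_const hbound
  have hQ : z ^ n * legendreQ n z
      = 1 / 2 * ∫ s in (-1 : ℝ)..1, s ^ n * legendreP n s / (z - s) := by
    rw [integral_pow_mul_legendreP_div_sub le_rfl hz, legendreQ]
    ring
  calc |legendreQ n z| = z⁻¹ ^ n * |z ^ n * legendreQ n z| := by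
        rw [abs_mul, abs_of_pos (pow_pos hz0 n), ← mul_assoc, ← mul_pow, inv_mul_cancel₀ hz0.ne',
          one_pow, one_mul]
    _ ≤ z⁻¹ ^ n * (1 / (z - 1)) := by
        gcongr
        rw [hQ, abs_mul, ← Real.norm_eq_abs (∫ _ in _.._, _)]
        norm_num at hI ⊢
        linarith
    _ = z⁻¹ ^ n / (z - 1) := by ring

end SecondKind

theorem christoffel_darboux_sum {R : Type*} [CommRing R] {p q : ℕ → R} {x y : R}
    (hp : ∀ n : ℕ, ((n : R) + 2) * p (n + 2)
      = (2 * (n : R) + 3) * x * p (n + 1) - ((n : R) + 1) * p n)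
    (hq : ∀ n : ℕ, ((n : R) + 2) * q (n + 2)
      = (2 * (n : R) + 3) * y * q (n + 1) - ((n : R) + 1) * q n)
    (N : ℕ) :
    (y - x) * ∑ n ∈ Finset.range (N + 1), (2 * (n : R) + 1) * q n * p n
      = (y - x) * q 0 * p 0 + (p 1 * q 0 - p 0 * q 1)
        - ((N : R) + 1) * (p (N + 1) * q N - p N * q (N + 1)) := by
  induction N with
  | zero => simp only [zero_add, Finset.range_one, Finset.sum_singleton, Nat.cast_zero,
      mul_zero, one_mul, add_sub_cancel_right]; ring
  | succ N ih =>
    rw [Finset.sum_range_succ, mul_add, ih]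
    push_cast
    linear_combination q (N + 1) * hp N - p (N + 1) * hq N

theorem abs_legendreP_mul_legendreQ_le (m n : ℕ) {t z : ℝ} (ht : t ∈ Set.Icc (-1 : ℝ) 1)
    (hz : 1 < z) : |legendreP m t * legendreQ n z| ≤ z⁻¹ ^ n / (z - 1) := by
  rw [abs_mul]
  exact (mul_le_of_le_one_left (abs_nonneg _) (abs_legendreP_le_one m ht)).trans
    (abs_legendreQ_le n hz)

theorem summable_succ_mul_geometric {r : ℝ} (hr : |r| < 1) :
    Summable fun n : ℕ => ((n : ℝ) + 1) * r ^ n := by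
  have h := (summable_pow_mul_geometric_of_norm_lt_one 1 hr).add
    (summable_geometric_of_abs_lt_one hr)
  simpa [add_mul] using h

theorem hasSum_of_sum_range_succ_eq {f e b : ℕ → ℝ} {a c : ℝ} (hb : Summable b)
    (hf : ∀ n, |f n| ≤ b n) (he : ∀ n, |e n| ≤ b n)
    (hsum : ∀ N, ∑ n ∈ Finset.range (N + 1), f n = (a - e N) / c) : HasSum f (a / c) := by
  rw [hasSum_iff_tendsto_nat_of_summable_norm (hb.of_nonneg_of_le (fun _ => norm_nonneg _) hf),
    ← Filter.tendsto_add_atTop_iff_nat 1]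
  simp only [hsum]
  have he0 : Filter.Tendsto e Filter.atTop (nhds 0) :=
    squeeze_zero_norm he hb.tendsto_atTop_zero
  simpa using (tendsto_const_nhds (x := a)).sub he0 |>.div_const c

theorem abs_heine_term_le {t z : ℝ} (ht : t ∈ Set.Icc (-1 : ℝ) 1) (hz : 1 < z) (n : ℕ) :
    |(2 * (n : ℝ) + 1) * legendreQ n z * legendreP n t|
      ≤ 2 / (z - 1) * ((n + 1) * z⁻¹ ^ n) := by
  rw [mul_assoc, abs_mul, mul_comm (legendreQ n z), abs_of_pos (by positivity)]
  calc (2 * (n : ℝ) + 1) * |legendreP n t * legendreQ n z|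
      ≤ (2 * (n : ℝ) + 2) * (z⁻¹ ^ n / (z - 1)) := by
        gcongr
        · norm_num
        · exact abs_legendreP_mul_legendreQ_le n n ht hz
    _ = 2 / (z - 1) * ((n + 1) * z⁻¹ ^ n) := by ring

theorem abs_heine_remainder_le {t z : ℝ} (ht : t ∈ Set.Icc (-1 : ℝ) 1) (hz : 1 < z) (N : ℕ) :
    |((N : ℝ) + 1) * (legendreP (N + 1) t * legendreQ N z - legendreP N t * legendreQ (N + 1) z)|
      ≤ 2 / (z - 1) * ((N + 1) * z⁻¹ ^ N) := by
  have hz1 : 0 < z - 1 := by linarith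
  have h1 := abs_legendreP_mul_legendreQ_le (N + 1) N ht hz
  have h2 := abs_legendreP_mul_legendreQ_le N (N + 1) ht hz
  have h3 : z⁻¹ ^ (N + 1) ≤ z⁻¹ ^ N :=
    pow_le_pow_of_le_one (by positivity) (inv_le_one_of_one_le₀ hz.le) N.le_succ
  rw [abs_mul, abs_of_pos (by positivity)]
  calc ((N : ℝ) + 1) * |legendreP (N + 1) t * legendreQ N z - legendreP N t * legendreQ (N + 1) z|
      ≤ ((N : ℝ) + 1) * (z⁻¹ ^ N / (z - 1) + z⁻¹ ^ N / (z - 1)) := by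
        gcongr
        exact (abs_sub _ _).trans (add_le_add h1 (h2.trans (by gcongr)))
    _ = 2 / (z - 1) * ((N + 1) * z⁻¹ ^ N) := by ring

theorem heine_identity (t z : ℝ) (ht : -1 < t) (ht' : t < 1) (hz : 1 < z) :
    HasSum
      (fun n : ℕ => (2 * (n : ℝ) + 1)
        * ((1 / 2) * ∫ s in (-1 : ℝ)..1, legendreP n s / (z - s)) * legendreP n t)
      (1 / (z - t)) := by
  change HasSum (fun n : ℕ => (2 * (n : ℝ) + 1) * legendreQ n z * legendreP n t) _
  have htI : t ∈ Set.Icc (-1 : ℝ) 1 := ⟨ht.le, ht'.le⟩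
  have hr : |z⁻¹| < 1 := by
    rw [abs_inv, abs_of_pos (one_pos.trans hz)]
    exact inv_lt_one_of_one_lt₀ hz
  refine hasSum_of_sum_range_succ_eq ((summable_succ_mul_geometric hr).mul_left _)
    (abs_heine_term_le htI hz) (abs_heine_remainder_le htI hz) fun N => ?_
  rw [eq_div_iff (by linarith), mul_comm, christoffel_darboux_sum (legendreP_recurrence · t)
    (legendreQ_recurrence · hz), legendreP_zero, legendreP_one, legendreQ_one hz]
  ring
end

section
/- For t ∈ [-1,1] and real x with |x| < 1, the Legendre polynomials satisfy the generating-function identity Σ_{n=0}^∞ P_n(t) x^n = (1 - 2 t x + x^2)^{-1/2}, with the series converging absolutely. -/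
open Polynomial Finset

namespace LegAux

lemma iter_deriv_add (m : ℕ) (p q : Polynomial ℝ) :
    derivative^[m] (p + q) = derivative^[m] p + derivative^[m] q := by
  induction m generalizing p q with
  | zero => simp
  | succ m ih =>
    rw [Function.iterate_succ_apply, derivative_add, ih,
      ← Function.iterate_succ_apply, ← Function.iterate_succ_apply]

lemma L1 (m : ℕ) (q : Polynomial ℝ) :
    derivative^[m] (X * q) = X * derivative^[m] q + C (m : ℝ) * derivative^[m - 1] q := by
  induction m generalizing q with
  | zero => simp
  | succ m ih =>
    cases m with
    | zero => simp [derivative_mul]; ring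
    | succ m =>
      rw [Function.iterate_succ_apply, derivative_mul, derivative_X, one_mul,
        iter_deriv_add, ih (derivative q), ← Function.iterate_succ_apply,
        ← Function.iterate_succ_apply]
      simp only [Nat.succ_sub_one, Nat.succ_eq_add_one]
      push_cast
      simp only [map_add, map_one]
      ring

end LegAux

namespace LegAux
open Polynomial

lemma dstep (k : ℕ) (p : Polynomial ℝ) :
    derivative (derivative^[k] p) = derivative^[k+1] p :=
  (Function.iterate_succ_apply' _ k p).symm

lemma aux_m (m : ℕ) (q : Polynomial ℝ) :
    C (((m:ℝ)+1)*(m:ℝ)) * derivative (derivative^[m-1] q)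
      = C (((m:ℝ)+1)*(m:ℝ)) * derivative^[m] q := by
  cases m with
  | zero => simp
  | succ m => rw [Nat.add_sub_cancel, dstep]

lemma L2 (m : ℕ) (q : Polynomial ℝ) :
    derivative^[m+1] ((X^2 - 1) * q) =
      (X^2 - 1) * derivative^[m+1] q + C (2*((m:ℝ)+1)) * (X * derivative^[m] q)
        + C (((m:ℝ)+1)*(m:ℝ)) * derivative^[m-1] q := by
  induction m generalizing q with
  | zero => simp [derivative_mul]; rw [map_ofNat]; ring
  | succ m ih =>
    rw [Function.iterate_succ_apply', ih, derivative_add, derivative_add,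
      derivative_mul, derivative_C_mul, derivative_C_mul, derivative_mul,
      derivative_X, dstep, dstep]
    rw [Nat.succ_sub_one, aux_m]
    have hd : derivative (X^2 - 1 : Polynomial ℝ) = C 2 * X := by
      simp; rw [one_add_one_eq_two, map_ofNat]
    rw [hd]
    push_cast
    simp only [map_add, map_mul, map_one, map_ofNat, map_pow]
    ring

end LegAux

namespace LegAux
open Polynomial

noncomputable def W (n : ℕ) : Polynomial ℝ := (X ^ 2 - 1) ^ n

lemma hW (n : ℕ) : derivative (W (n+1)) = C (2*((n:ℝ)+1)) * (X * W n) := by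
  rw [W, derivative_pow]
  have : derivative (X^2 - 1 : Polynomial ℝ) = C 2 * X := by simp; rw [one_add_one_eq_two, map_ofNat]
  rw [this, W]
  push_cast
  simp only [Nat.add_sub_cancel, map_add, map_mul, map_one, map_ofNat]
  ring

lemma A0 (n : ℕ) : derivative^[n+2] (W (n+1)) =
    C (2*((n:ℝ)+1)) * (X * derivative^[n+1] (W n) + C ((n:ℝ)+1) * derivative^[n] (W n)) := by
  rw [Function.iterate_succ_apply, hW, iterate_derivative_C_mul, L1 (n+1),
    Nat.add_sub_cancel]
  push_cast
  ring

lemma C0 (n : ℕ) : derivative^[n+1] (W (n+1)) =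
    C 2 * ((X^2-1) * derivative^[n+1] (W n)) + C (2*((n:ℝ)+1)) * (X * derivative^[n] (W n)) := by
  have E1 : derivative^[n+1] (W (n+1)) =
      C (2*((n:ℝ)+1)) * (X * derivative^[n] (W n) + C ((n:ℝ)) * derivative^[n-1] (W n)) := by
    rw [Function.iterate_succ_apply, hW, iterate_derivative_C_mul, L1 n]
  have E2 : derivative^[n+1] (W (n+1)) =
      (X^2-1) * derivative^[n+1] (W n) + C (2*((n:ℝ)+1)) * (X * derivative^[n] (W n))
        + C (((n:ℝ)+1)*(n:ℝ)) * derivative^[n-1] (W n) := by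
    have : W (n+1) = (X^2 - 1) * W n := by rw [W, W, pow_succ']
    rw [this, L2 n]
  simp only [map_add, map_mul, map_one, map_ofNat] at E1 E2 ⊢
  linear_combination 2 * E2 - E1

end LegAux

namespace LegAux
open Polynomial

noncomputable def legP (n : ℕ) : Polynomial ℝ :=
  C (1 / (2 ^ n * (n.factorial : ℝ))) * derivative^[n] (W n)

lemma hk (n : ℕ) : (1 / (2 ^ (n+1) * ((n+1).factorial : ℝ))) * (2*((n:ℝ)+1))
    = 1 / (2 ^ n * (n.factorial : ℝ)) := by
  rw [Nat.factorial_succ]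
  push_cast
  have h1 : (n.factorial : ℝ) ≠ 0 := Nat.cast_ne_zero.mpr n.factorial_ne_zero
  have h2 : (2:ℝ)^n ≠ 0 := by positivity
  field_simp
  ring

lemma A' (n : ℕ) : derivative (legP (n+1)) =
    X * derivative (legP n) + C ((n:ℝ)+1) * legP n := by
  rw [legP, legP, derivative_C_mul, dstep, A0]
  rw [← mul_assoc, ← map_mul, hk, derivative_C_mul, dstep]
  ring

lemma C' (n : ℕ) : C ((n:ℝ)+1) * legP (n+1) =
    (X^2-1) * derivative (legP n) + C ((n:ℝ)+1) * (X * legP n) := by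
  rw [legP, legP, derivative_C_mul, dstep, ← mul_assoc, ← map_mul, C0]
  have hk1 : (((n:ℝ)+1) * (1 / (2 ^ (n+1) * ((n+1).factorial : ℝ)))) * 2
      = 1 / (2 ^ n * (n.factorial : ℝ)) := by
    rw [← hk n]; ring
  have hk2 : (((n:ℝ)+1) * (1 / (2 ^ (n+1) * ((n+1).factorial : ℝ)))) * (2*((n:ℝ)+1))
      = ((n:ℝ)+1) * (1 / (2 ^ n * (n.factorial : ℝ))) := by
    rw [← hk n]; ring
  have hc1 := congrArg C hk1
  have hc2 := congrArg C hk2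
  simp only [map_mul, map_add, map_one, map_ofNat, map_div₀] at hc1 hc2 ⊢
  linear_combination ((X^2-1) * derivative^[n+1] (W n)) * hc1
    + (X * derivative^[n] (W n)) * hc2

lemma Did (n : ℕ) : (X^2-1) * derivative (legP (n+1)) =
    C ((n:ℝ)+1) * (X * legP (n+1) - legP n) := by
  linear_combination (X^2-1) * A' n - X * C' n

lemma bonnet (n : ℕ) : C ((n:ℝ)+2) * legP (n+2) =
    C (2*(n:ℝ)+3) * (X * legP (n+1)) - C ((n:ℝ)+1) * legP n := by
  have h1 := C' (n+1)
  have h2 := Did n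
  push_cast at h1
  simp only [map_add, map_mul, map_one, map_ofNat, eval_one] at h1 h2 ⊢
  linear_combination h1 + h2

end LegAux

namespace LegAux
open Polynomial

lemma bridge (k : ℕ) (p : Polynomial ℝ) :
    iteratedDeriv k (fun y : ℝ => eval y p) = fun t => eval t (derivative^[k] p) := by
  induction k with
  | zero => simp
  | succ k ih =>
    rw [iteratedDeriv_succ, ih]
    funext t
    rw [Polynomial.deriv, dstep]

lemma legendreP_eval (n : ℕ) (t : ℝ) : legendreP n t = (legP n).eval t := by
  have h : (fun y : ℝ => (y ^ 2 - 1) ^ n) = fun y : ℝ => eval y (W n) := by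
    funext y; simp [W]
  rw [legendreP, h, bridge, legP]
  simp

lemma legendreP_zero (t : ℝ) : legendreP 0 t = 1 := by
  simp [legendreP]

lemma legendreP_one (t : ℝ) : legendreP 1 t = t := by
  rw [legendreP_eval]
  have : legP 1 = C (1/2) * (C 2 * X) := by
    rw [legP, W]
    congr 1
    · norm_num
    · simp; rw [one_add_one_eq_two, map_ofNat]
  rw [this]
  simp

lemma bonnet_eval (n : ℕ) (t : ℝ) : ((n:ℝ)+2) * legendreP (n+2) t =
    (2*(n:ℝ)+3) * (t * legendreP (n+1) t) - ((n:ℝ)+1) * legendreP n t := by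
  have h := congrArg (eval t) (bonnet n)
  simp only [eval_mul, eval_add, eval_sub, eval_C, eval_X, eval_ofNat, map_add, map_mul,
    map_one, map_ofNat, eval_one] at h
  rw [legendreP_eval, legendreP_eval, legendreP_eval]
  linarith [h]

end LegAux

namespace LegAux

noncomputable def cc : ℕ → ℝ
  | 0 => 1
  | (k+1) => cc k * (2*(k:ℝ)+1) / (2*(k:ℝ)+2)

lemma cc_pos (k : ℕ) : 0 < cc k := by
  induction k with
  | zero => norm_num [cc]
  | succ k ih => rw [cc]; positivity

lemma cc_le_one (k : ℕ) : cc k ≤ 1 := by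
  induction k with
  | zero => norm_num [cc]
  | succ k ih =>
    rw [cc, div_le_one (by positivity)]
    nlinarith [cc_pos k]

lemma keyid (i m : ℕ) : ((i:ℝ)+(m:ℝ)+2) * (cc (i+1) * cc (m+1)) =
    ((2*((i:ℝ)+(m:ℝ))+3)/2) * (cc i * cc (m+1) + cc (i+1) * cc m)
      - ((i:ℝ)+(m:ℝ)+1) * (cc i * cc m) := by
  rw [cc, cc]
  have h1 : (2*(i:ℝ)+2) ≠ 0 := by positivity
  have h2 : (2*(m:ℝ)+2) ≠ 0 := by positivity
  field_simp
  ring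

lemma boundary (k : ℕ) : ((k:ℝ)+2) * cc (k+2) = ((2*(k:ℝ)+3)/2) * cc (k+1) := by
  rw [cc]
  push_cast
  have h1 : (2*((k:ℝ)+1)+2) ≠ 0 := by positivity
  field_simp
  ring

noncomputable def BB (a b : ℂ) (n : ℕ) : ℂ :=
  ∑ k ∈ Finset.range (n+1), ((cc k * cc (n-k) : ℝ) : ℂ) * a^k * b^(n-k)

lemma BBrec (a b : ℂ) (hab : a * b = 1) (n : ℕ) :
    ((n:ℂ)+2) * BB a b (n+2) =
      (2*(n:ℂ)+3) * ((a + b)/2) * BB a b (n+1) - ((n:ℂ)+1) * BB a b n := by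
  have step1 : (2*(n:ℂ)+3) * ((a + b)/2) * BB a b (n+1) =
      (∑ j ∈ Finset.range (n+2),
        ((2*(n:ℂ)+3)/2) * ((cc j * cc (n+1-j) : ℝ) : ℂ) * a^(j+1) * b^(n+1-j)) +
      ∑ j ∈ Finset.range (n+2),
        ((2*(n:ℂ)+3)/2) * ((cc j * cc (n+1-j) : ℝ) : ℂ) * a^j * b^(n+2-j) := by
    rw [BB, Finset.mul_sum, ← Finset.sum_add_distrib]
    refine Finset.sum_congr rfl fun j hj => ?_
    have hj' : j ≤ n + 1 := by
      simpa [Nat.lt_succ_iff] using hj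
    have hb : b^(n+2-j) = b^(n+1-j) * b := by
      rw [← pow_succ]
      congr 1
      omega
    rw [hb]
    ring
  have step2 : ((n:ℂ)+1) * BB a b n =
      ∑ j ∈ Finset.range (n+1),
        ((n:ℂ)+1) * ((cc j * cc (n-j) : ℝ) : ℂ) * a^(j+1) * b^(n+1-j) := by
    rw [BB, Finset.mul_sum]
    refine Finset.sum_congr rfl fun j hj => ?_
    have hj' : j ≤ n := by simpa [Nat.lt_succ_iff] using hj
    have : a^(j+1) * b^(n+1-j) = (a * b) * (a^j * b^(n-j)) := by
      rw [pow_succ]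
      have hb : b^(n+1-j) = b^(n-j) * b := by
        rw [← pow_succ]; congr 1; omega
      rw [hb]; ring
    linear_combination (-(((n:ℂ)+1) * ((cc j * cc (n-j) : ℝ) : ℂ))) * this
      + (-(((n:ℂ)+1) * ((cc j * cc (n-j) : ℝ) : ℂ) * (a^j * b^(n-j)))) * hab
  rw [step1, step2, BB, Finset.mul_sum]
  rw [Finset.sum_range_succ'
    (fun j => ((n:ℂ)+2) * (((cc j * cc (n+2-j) : ℝ) : ℂ) * a^j * b^(n+2-j)))]
  rw [Finset.sum_range_succ'
    (fun j => ((2*(n:ℂ)+3)/2) * ((cc j * cc (n+1-j) : ℝ) : ℂ) * a^j * b^(n+2-j))]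
  rw [Finset.sum_range_succ
    (fun j => ((n:ℂ)+2) * (((cc (j+1) * cc (n+2-(j+1)) : ℝ) : ℂ) * a^(j+1) * b^(n+2-(j+1))))]
  rw [Finset.sum_range_succ
    (fun j => ((2*(n:ℂ)+3)/2) * ((cc j * cc (n+1-j) : ℝ) : ℂ) * a^(j+1) * b^(n+1-j))]
  have hpt : ∀ j ∈ Finset.range (n+1),
      ((n:ℂ)+2) * (((cc (j+1) * cc (n+2-(j+1)) : ℝ) : ℂ) * a^(j+1) * b^(n+2-(j+1))) =
        ((2*(n:ℂ)+3)/2) * ((cc j * cc (n+1-j) : ℝ) : ℂ) * a^(j+1) * b^(n+1-j)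
        + ((2*(n:ℂ)+3)/2) * ((cc (j+1) * cc (n+1-(j+1)) : ℝ) : ℂ) * a^(j+1) * b^(n+2-(j+1))
        - ((n:ℂ)+1) * ((cc j * cc (n-j) : ℝ) : ℂ) * a^(j+1) * b^(n+1-j) := by
    intro j hj
    have hj' : j ≤ n := by simpa [Nat.lt_succ_iff] using hj
    obtain ⟨m, rfl⟩ : ∃ m, n = j + m := ⟨n - j, by omega⟩
    have e1 : j + m + 2 - (j+1) = m + 1 := by omega
    have e2 : j + m + 1 - j = m + 1 := by omega
    have e3 : j + m + 1 - (j+1) = m := by omega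
    have e4 : j + m - j = m := by omega
    rw [e1, e2, e3, e4]
    have hkey := congrArg (Complex.ofReal) (keyid j m)
    push_cast at hkey ⊢
    linear_combination (a^(j+1) * b^(m+1)) * hkey
  have hsum := Finset.sum_congr rfl hpt
  rw [hsum, Finset.sum_sub_distrib, Finset.sum_add_distrib]
  have hb1 : ((n:ℂ)+2) * (((cc (n+1+1) * cc (n+2-(n+1+1)) : ℝ) : ℂ) * a^(n+1+1) * b^(n+2-(n+1+1)))
      = ((2*(n:ℂ)+3)/2) * ((cc (n+1) * cc (n+1-(n+1)) : ℝ) : ℂ) * a^(n+1+1) * b^(n+1-(n+1)) := by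
    have e1 : n + 2 - (n + 1 + 1) = 0 := by omega
    have e2 : n + 1 - (n + 1) = 0 := by omega
    have hcc0 : cc 0 = 1 := rfl
    have hkey := congrArg (Complex.ofReal) (boundary n)
    push_cast at hkey
    simp only [e1, e2, hcc0, pow_zero, mul_one]
    push_cast
    linear_combination (a^(n+1+1)) * hkey
  have hb2 : ((n:ℂ)+2) * (((cc 0 * cc (n+2-0) : ℝ) : ℂ) * a^0 * b^(n+2-0))
      = ((2*(n:ℂ)+3)/2) * ((cc 0 * cc (n+1-0) : ℝ) : ℂ) * a^0 * b^(n+2-0) := by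
    have hcc0 : cc 0 = 1 := rfl
    have hkey := congrArg (Complex.ofReal) (boundary n)
    push_cast at hkey
    simp only [Nat.sub_zero, hcc0, one_mul, pow_zero]
    push_cast
    linear_combination (b^(n+2)) * hkey
  rw [hb1, hb2]
  ring

end LegAux

namespace LegAux
open Complex

lemma natC_ne (n : ℕ) : ((n:ℂ)+2) ≠ 0 := by
  have : ((n:ℂ)+2) = ((n+2 : ℕ) : ℂ) := by push_cast; ring
  rw [this]
  exact Nat.cast_ne_zero.mpr (by omega)

lemma BB_one_pair (n : ℕ) : BB 1 1 n = 1 ∧ BB 1 1 (n+1) = 1 := by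
  induction n with
  | zero =>
    constructor
    · simp [BB, cc]
    · rw [BB]
      rw [Finset.sum_range_succ, Finset.sum_range_succ, Finset.sum_range_zero]
      norm_num [cc]
  | succ n ih =>
    refine ⟨ih.2, ?_⟩
    have h := BBrec 1 1 (by norm_num) n
    rw [ih.1, ih.2] at h
    apply mul_left_cancel₀ (natC_ne n)
    rw [h]
    ring

end LegAux

namespace LegAux
open Complex

lemma sum_cc (n : ℕ) : ∑ k ∈ Finset.range (n+1), cc k * cc (n-k) = 1 := by
  have h := (BB_one_pair n).1
  rw [BB] at h
  simp only [one_pow, mul_one] at h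
  rw [← Complex.ofReal_sum] at h
  exact_mod_cast h

lemma BB_norm (a b : ℂ) (ha : ‖a‖ = 1) (hb : ‖b‖ = 1) (n : ℕ) : ‖BB a b n‖ ≤ 1 := by
  rw [BB]
  calc ‖∑ k ∈ Finset.range (n+1), ((cc k * cc (n-k) : ℝ) : ℂ) * a^k * b^(n-k)‖
      ≤ ∑ k ∈ Finset.range (n+1), ‖((cc k * cc (n-k) : ℝ) : ℂ) * a^k * b^(n-k)‖ :=
        norm_sum_le _ _
    _ = ∑ k ∈ Finset.range (n+1), cc k * cc (n-k) := by
        refine Finset.sum_congr rfl fun k _ => ?_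
        rw [norm_mul, norm_mul, norm_pow, norm_pow, ha, hb]
        simp [Complex.norm_real, abs_mul, abs_of_pos (cc_pos k), abs_of_pos (cc_pos (n-k))]
    _ = 1 := sum_cc n

lemma BB_eq_legendreP (a b : ℂ) (t : ℝ) (hab : a * b = 1) (hs : a + b = 2*(t:ℂ)) :
    ∀ n, BB a b n = ((legendreP n t : ℝ) : ℂ) := by
  have key : ∀ n, BB a b n = ((legendreP n t : ℝ) : ℂ) ∧
      BB a b (n+1) = ((legendreP (n+1) t : ℝ) : ℂ) := by
    intro n
    induction n with
    | zero =>
      constructor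
      · rw [legendreP_zero]
        simp [BB, cc]
      · rw [legendreP_one, BB]
        rw [Finset.sum_range_succ, Finset.sum_range_succ, Finset.sum_range_zero]
        have hcc0 : cc 0 = 1 := rfl
        have hcc1 : cc 1 = 1/2 := by norm_num [cc]
        rw [hcc0, hcc1]
        push_cast
        linear_combination hs / 2
    | succ n ih =>
      refine ⟨ih.2, ?_⟩
      have h := BBrec a b hab n
      rw [ih.1, ih.2, hs] at h
      have hb := congrArg (Complex.ofReal) (bonnet_eval n t)
      push_cast at hb
      apply mul_left_cancel₀ (natC_ne n)
      rw [h]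
      push_cast
      linear_combination -hb
  exact fun n => (key n).1

end LegAux

namespace LegAux
open Complex

noncomputable def F (w : ℂ) : ℂ := ∑' n, ((cc n : ℝ) : ℂ) * w^n

lemma F_norm_summable {w : ℂ} (hw : ‖w‖ < 1) :
    Summable fun n => ‖((cc n : ℝ) : ℂ) * w^n‖ := by
  apply Summable.of_nonneg_of_le (fun n => norm_nonneg _)
    (fun n => ?_) (summable_geometric_of_lt_one (norm_nonneg w) hw)
  rw [norm_mul, norm_pow, Complex.norm_real]
  calc |cc n| * ‖w‖^n ≤ 1 * ‖w‖^n := by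
        apply mul_le_mul_of_nonneg_right _ (by positivity)
        rw [abs_of_pos (cc_pos n)]; exact cc_le_one n
    _ = ‖w‖^n := one_mul _

lemma F_hasSum {w : ℂ} (hw : ‖w‖ < 1) :
    HasSum (fun n => ((cc n : ℝ) : ℂ) * w^n) (F w) :=
  (F_norm_summable hw).of_norm.hasSum

lemma F_conj {w : ℂ} (hw : ‖w‖ < 1) : F ((starRingEnd ℂ) w) = (starRingEnd ℂ) (F w) := by
  have h := Complex.hasSum_conj'.mpr (F_hasSum hw)
  have h2 : HasSum (fun n => ((cc n : ℝ) : ℂ) * ((starRingEnd ℂ) w)^n)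
      ((starRingEnd ℂ) (F w)) := by
    refine h.congr_fun fun n => ?_
    simp [map_mul, map_pow, Complex.conj_ofReal]
  have hw' : ‖(starRingEnd ℂ) w‖ < 1 := by rwa [RCLike.norm_conj]
  exact (F_hasSum hw').unique h2

lemma F_sq {w : ℂ} (hw : ‖w‖ < 1) : F w * F w = (1 - w)⁻¹ := by
  have hc := hasSum_sum_range_mul_of_summable_norm (F_norm_summable hw) (F_norm_summable hw)
  have hterm : ∀ n, (∑ k ∈ Finset.range (n+1),
      (((cc k : ℝ) : ℂ) * w^k) * (((cc (n-k) : ℝ) : ℂ) * w^(n-k))) = w^n := by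
    intro n
    have : ∀ k ∈ Finset.range (n+1), (((cc k : ℝ) : ℂ) * w^k) * (((cc (n-k) : ℝ) : ℂ) * w^(n-k))
        = ((cc k * cc (n-k) : ℝ) : ℂ) * w^n := by
      intro k hk
      have hk' : k ≤ n := by simpa [Nat.lt_succ_iff] using hk
      have hw' : w^k * w^(n-k) = w^n := by
        rw [← pow_add]; congr 1; omega
      push_cast
      linear_combination ((cc k : ℝ) : ℂ) * ((cc (n-k) : ℝ) : ℂ) * hw'
    rw [Finset.sum_congr rfl this, ← Finset.sum_mul, ← Complex.ofReal_sum, sum_cc]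
    simp
  rw [show (∑' n, ((cc n : ℝ) : ℂ) * w^n) = F w from rfl] at hc
  have hc' : HasSum (fun n => w^n) (F w * F w) := hc.congr_fun fun n => (hterm n).symm
  exact hc'.unique (hasSum_geometric_of_norm_lt_one hw)

end LegAux


open LegAux Complex

theorem legendre_generating_function (t x : ℝ) (ht : t ∈ Set.Icc (-1 : ℝ) 1)
    (hx : |x| < 1) :
    Summable (fun n : ℕ => |legendreP n t * x ^ n|) ∧
    HasSum (fun n : ℕ => legendreP n t * x ^ n)
      (1 / Real.sqrt (1 - 2 * t * x + x ^ 2)) := by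
  obtain ⟨ht1, ht2⟩ := ht
  set q : ℝ := 1 - 2*t*x + x^2 with hq
  have habs : |t*x| < 1 := by
    calc |t*x| = |t| * |x| := abs_mul t x
      _ ≤ 1 * |x| := mul_le_mul_of_nonneg_right (abs_le.mpr ⟨ht1, ht2⟩) (abs_nonneg x)
      _ < 1 := by rwa [one_mul]
  have hq_pos : 0 < q := by
    have h1 := (abs_lt.mp habs).2
    have h2 : 0 ≤ x^2*(1-t^2) := by
      have : 0 ≤ 1 - t^2 := by nlinarith
      positivity
    nlinarith [sq_nonneg (1 - t*x)]
  set s : ℝ := Real.sqrt (1 - t^2) with hsdef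
  have hs2 : s^2 = 1 - t^2 := Real.sq_sqrt (by nlinarith)
  set a : ℂ := (t:ℂ) + (s:ℂ)*Complex.I with hadef
  set b : ℂ := (t:ℂ) - (s:ℂ)*Complex.I with hbdef
  have hb_conj : b = (starRingEnd ℂ) a := by
    rw [hadef, hbdef]
    simp [map_add, map_mul, Complex.conj_ofReal, Complex.conj_I]
    ring
  have hab : a * b = 1 := by
    have h : a * b = ((t^2 + s^2 : ℝ) : ℂ) := by
      rw [hadef, hbdef]
      push_cast
      linear_combination (-(s:ℂ)^2) * Complex.I_sq
    rw [h, hs2]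
    norm_num
  have hsum2t : a + b = 2*(t:ℂ) := by rw [hadef, hbdef]; ring
  have hna : ‖a‖ = 1 := by
    have h1 : Complex.normSq a = 1 := by
      rw [hadef, Complex.normSq_add_mul_I]
      linarith [hs2]
    rw [Complex.norm_def, h1, Real.sqrt_one]
  have hnb : ‖b‖ = 1 := by rw [hb_conj, RCLike.norm_conj, hna]
  have hBleg := BB_eq_legendreP a b t hab hsum2t
  have hbound : ∀ n, |legendreP n t| ≤ 1 := by
    intro n
    have h := BB_norm a b hna hnb n
    rwa [hBleg n, Complex.norm_real] at h
  have hsummable : Summable (fun n : ℕ => |legendreP n t * x ^ n|) := by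
    apply Summable.of_nonneg_of_le (fun n => abs_nonneg _) (fun n => ?_)
      (summable_geometric_of_lt_one (abs_nonneg x) hx)
    rw [abs_mul, _root_.abs_pow]
    calc |legendreP n t| * |x| ^ n ≤ 1 * |x| ^ n :=
          mul_le_mul_of_nonneg_right (hbound n) (by positivity)
      _ = |x| ^ n := one_mul _
  refine ⟨hsummable, ?_⟩
  have hax : ‖a * (x:ℂ)‖ < 1 := by
    rw [norm_mul, hna, one_mul, Complex.norm_real]; exact hx
  have hbx : ‖b * (x:ℂ)‖ < 1 := by
    rw [norm_mul, hnb, one_mul, Complex.norm_real]; exact hx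
  have hc := hasSum_sum_range_mul_of_summable_norm (F_norm_summable hax) (F_norm_summable hbx)
  rw [show (∑' n, ((cc n : ℝ):ℂ) * (a*(x:ℂ))^n) = F (a*(x:ℂ)) from rfl,
      show (∑' n, ((cc n : ℝ):ℂ) * (b*(x:ℂ))^n) = F (b*(x:ℂ)) from rfl] at hc
  have hterm : ∀ n, (∑ k ∈ Finset.range (n+1),
      (((cc k : ℝ):ℂ) * (a*(x:ℂ))^k) * (((cc (n-k) : ℝ):ℂ) * (b*(x:ℂ))^(n-k)))
        = ((legendreP n t * x^n : ℝ) : ℂ) := by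
    intro n
    have h1 : ∀ k ∈ Finset.range (n+1),
        (((cc k : ℝ):ℂ) * (a*(x:ℂ))^k) * (((cc (n-k) : ℝ):ℂ) * (b*(x:ℂ))^(n-k))
          = (((cc k * cc (n-k) : ℝ):ℂ) * a^k * b^(n-k)) * (x:ℂ)^n := by
      intro k hk
      have hk' : k ≤ n := by simpa [Nat.lt_succ_iff] using hk
      have hxp : (x:ℂ)^k * (x:ℂ)^(n-k) = (x:ℂ)^n := by
        rw [← pow_add]; congr 1; omega
      rw [mul_pow, mul_pow]
      push_cast
      linear_combination ((cc k : ℝ):ℂ) * a^k * ((cc (n-k) : ℝ):ℂ) * b^(n-k) * hxp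
    rw [Finset.sum_congr rfl h1, ← Finset.sum_mul, ← BB, hBleg n]
    push_cast
    ring
  have hc' : HasSum (fun n => ((legendreP n t * x^n : ℝ):ℂ)) (F (a*↑x) * F (b*↑x)) :=
    hc.congr_fun fun n => (hterm n).symm
  have hFb : F (b*(x:ℂ)) = (starRingEnd ℂ) (F (a*(x:ℂ))) := by
    have h : b*(x:ℂ) = (starRingEnd ℂ) (a*(x:ℂ)) := by
      rw [hb_conj]
      simp [map_mul, Complex.conj_ofReal]
    rw [h, F_conj hax]
  set L : ℝ := Complex.normSq (F (a*(x:ℂ))) with hL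
  have hval : F (a*(x:ℂ)) * F (b*(x:ℂ)) = ((L : ℝ) : ℂ) := by
    rw [hFb, Complex.mul_conj]
  have hcr : HasSum (fun n => legendreP n t * x^n) L := by
    rw [hval] at hc'
    exact Complex.hasSum_ofReal.mp hc'
  have hq1 : (1 - a*(x:ℂ)) * (1 - b*(x:ℂ)) = ((q:ℝ):ℂ) := by
    rw [hq]
    push_cast
    linear_combination ((x:ℂ)^2) * hab - (x:ℂ) * hsum2t
  have hL2 : L^2 = q⁻¹ := by
    have h1 := F_sq hax
    have h2 := F_sq hbx
    have hcast : ((L^2 : ℝ):ℂ) = ((q⁻¹ : ℝ):ℂ) := by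
      push_cast
      calc ((L:ℂ))^2 = (F (a*↑x) * F (b*↑x))^2 := by rw [hval]
        _ = (F (a*↑x) * F (a*↑x)) * (F (b*↑x) * F (b*↑x)) := by ring
        _ = (1 - a*↑x)⁻¹ * (1 - b*↑x)⁻¹ := by rw [h1, h2]
        _ = ((1 - a*↑x) * (1 - b*↑x))⁻¹ := (mul_inv _ _).symm
        _ = (((q:ℝ)):ℂ)⁻¹ := by rw [hq1]
    exact_mod_cast hcast
  have hLnn : 0 ≤ L := Complex.normSq_nonneg _
  have hLval : L = 1 / Real.sqrt q := by
    rw [one_div, ← Real.sqrt_inv, ← hL2, Real.sqrt_sq hLnn]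
  rw [← hLval]
  exact hcr
end
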